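/- For every Laurent polynomial a ∈ ℂ[t,t⁻¹], the iterated super-bracket {[e_{w₃−w₁}(a), q_{w₁+w₄}], q_{w₁+w₂}} — that is, X·q_{w₁+w₂} + q_{w₁+w₂}·X where X = e_{w₃−w₁}(a)·q_{w₁+w₄} − q_{w₁+w₄}·e_{w₃−w₁}(a) — equals −Vir(a). (This is the alternative expression of the Virasoro element used in Section 7 of the paper, with signs fixed by the stated conventions.) -/

import Mathlib

open LaurentPolynomial Matrix

noncomputable section

/-- `R = ℂ[t,t⁻¹]`, the algebra of complex Laurent polynomials. -/
abbrev R := LaurentPolynomial ℂ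

/-- Differentiation on Laurent polynomials, as a `ℂ`-linear endomorphism:
`D (T n) = n • T (n-1)`, i.e. `D f = f'`. -/
noncomputable def Der : Module.End ℂ R :=
  (Finsupp.lsum ℂ fun n : ℤ =>
    LinearMap.toSpanSingleton ℂ R ((n : ℂ) • LaurentPolynomial.T (n - 1)) :
      (ℤ →₀ ℂ) →ₗ[ℂ] R) ∘ₗ (AddMonoidAlgebra.coeffLinearEquiv ℂ : R ≃ₗ[ℂ] (ℤ →₀ ℂ)).toLinearMap

/-- Multiplication by `a ∈ R` as a `ℂ`-linear endomorphism `m_a`. -/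
noncomputable def mulE (a : R) : Module.End ℂ R := LinearMap.mulLeft ℂ a

/-- The ring of operators `E = End_ℂ(R)`. -/
abbrev E := Module.End ℂ R

/-- 8×8 matrices over `E`, written as 2×2 blocks of 4×4 matrices. -/
abbrev M8 := Matrix (Fin 4 ⊕ Fin 4) (Fin 4 ⊕ Fin 4) E

/-- `b_{ij} = e_{ij} - e_{ji}` (entries are the identity operator); indices 0-based. -/
noncomputable def bMat (i j : Fin 4) : Matrix (Fin 4) (Fin 4) E :=
  Matrix.single i j 1 - Matrix.single j i 1

/-- `e_{w_i - w_j}(a) = [[e_{ij} m_a, 0],[0, -e_{ji} m_a]]`; indices 0-based. -/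
noncomputable def eW (i j : Fin 4) (a : R) : M8 :=
  Matrix.fromBlocks (Matrix.single i j (mulE a)) 0 0
    (-(Matrix.single j i (mulE a)))

/-- `h_{w_i - w_j}(a) = [[(e_{ii}-e_{jj}) m_a, 0],[0, (e_{jj}-e_{ii}) m_a]]`; indices 0-based. -/
noncomputable def hW (i j : Fin 4) (a : R) : M8 :=
  Matrix.fromBlocks
    (Matrix.single i i (mulE a) - Matrix.single j j (mulE a)) 0 0
    (Matrix.single j j (mulE a) - Matrix.single i i (mulE a))

/-- `φ` on the basis `b_{ij}` (`i < j`) of skew matrices (0-based indices):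
`φ(b₁₂) = b₃₄`, `φ(b₁₃) = -b₂₄`, `φ(b₁₄) = b₂₃`, `φ(b₂₃) = b₁₄`, `φ(b₂₄) = -b₁₃`,
`φ(b₃₄) = b₁₂` (the involution `k = k' + k'' ↦ k' - k''`). -/
noncomputable def phiB (i j : Fin 4) : Matrix (Fin 4) (Fin 4) E :=
  if i = 0 ∧ j = 1 then bMat 2 3
  else if i = 0 ∧ j = 2 then -(bMat 1 3)
  else if i = 0 ∧ j = 3 then bMat 1 2
  else if i = 1 ∧ j = 2 then bMat 0 3
  else if i = 1 ∧ j = 3 then -(bMat 0 2)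
  else if i = 2 ∧ j = 3 then bMat 0 1
  else 0

/-- `q_{w_i + w_j} = [[0, b_{ij}],[φ(b_{ij})D, 0]]` for `i < j`; indices 0-based. -/
noncomputable def qP (i j : Fin 4) : M8 :=
  Matrix.fromBlocks 0 (bMat i j) (phiB i j * Matrix.scalar (Fin 4) Der) 0

/-- `q_{-w_i - w_j}(a) = [[0,0],[(e_{ij}+e_{ji}) m_a, 0]]`; indices 0-based. -/
noncomputable def qM (i j : Fin 4) (a : R) : M8 :=
  Matrix.fromBlocks 0 0
    (Matrix.single i j (mulE a) + Matrix.single j i (mulE a)) 0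

/-- `Vir(a) = [[I₄ m_a D + e₁₁ m_{a'}, 0],[0, I₄ m_a D + (I₄ - e₁₁) m_{a'}]]`. -/
noncomputable def Vir (a : R) : M8 :=
  Matrix.fromBlocks
    (Matrix.scalar (Fin 4) (mulE a * Der) + Matrix.single 0 0 (mulE (Der a))) 0 0
    (Matrix.scalar (Fin 4) (mulE a * Der) +
      (Matrix.scalar (Fin 4) (mulE (Der a)) - Matrix.single 0 0 (mulE (Der a))))

/-! The bracket is block diagonal: `e_{w₃-w₁}(a)` is block diagonal and both `q`'s are block
off-diagonal, so `X = [e_{w₃-w₁}(a), q_{w₁+w₄}] = [[0, m_a b₃₄], [e₁₂ m_a D - e₂₁ D m_a, 0]]` is off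
diagonal again. In `{X, q_{w₁+w₂}}` the products of matrix units put `-m_a D` on every diagonal
entry except `e₁₁` of the upper block and `e₂₂, e₃₃, e₄₄` of the lower one, where `-D m_a`
appears instead; Leibniz' rule `D m_a = m_a D + m_{a'}` turns these into the `m_{a'}` terms of
`-Vir(a)`. -/

lemma Der_C_mul_T (c : ℂ) (n : ℤ) : Der (C c * T n) = C (c * n) * T (n - 1) := by
  rw [← single_eq_C_mul_T, ← single_eq_C_mul_T]
  simp only [Der, LinearMap.comp_apply, LinearEquiv.coe_coe,
    AddMonoidAlgebra.coeffLinearEquiv_apply, AddMonoidAlgebra.coeff_single, Finsupp.lsum_single,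
    LinearMap.toSpanSingleton_apply]
  rw [T, smul_smul, AddMonoidAlgebra.smul_single, smul_eq_mul, mul_one]

lemma Der_mul (f g : R) : Der (f * g) = Der f * g + f * Der g := by
  induction f using LaurentPolynomial.induction_on' with
  | add p q hp hq => simp only [add_mul, map_add, hp, hq]; ring
  | C_mul_T n c =>
    induction g using LaurentPolynomial.induction_on' with
    | add p q hp hq => simp only [mul_add, map_add, hp, hq]; ring
    | C_mul_T m d =>
      have hprod : C c * T n * (C d * T m) = C (c * d) * T (n + m) := by
        rw [map_mul, T_add]; ring
      have hshift : (T (n + m - 1) : R) = T (n - 1) * T m := by rw [← T_add]; ring_nf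
      have hshift' : (T n * T (m - 1) : R) = T (n - 1) * T m := by
        rw [← T_add, ← T_add]; ring_nf
      rw [hprod, Der_C_mul_T, Der_C_mul_T, Der_C_mul_T, hshift]
      simp only [map_mul, Int.cast_add, map_add]
      linear_combination -C c * C d * C (m : ℂ) * hshift'

lemma Der_mul_mulE (a : R) : Der * mulE a = mulE a * Der + mulE (Der a) := by
  ext f
  simp [mulE, Module.End.mul_apply, Der_mul, add_comm]

section Blocks

variable {n m α : Type*} [Fintype n] [Fintype m]

theorem commutator_fromBlocks_diag_offDiag [NonUnitalNonAssocRing α]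
    (A : Matrix n n α) (D : Matrix m m α) (B : Matrix n m α) (C : Matrix m n α) :
    fromBlocks A 0 0 D * fromBlocks 0 B C 0 - fromBlocks 0 B C 0 * fromBlocks A 0 0 D =
      fromBlocks 0 (A * B - B * D) (D * C - C * A) 0 := by
  simp only [fromBlocks_multiply, Matrix.mul_zero, Matrix.zero_mul, add_zero, zero_add,
    sub_eq_add_neg, fromBlocks_neg, fromBlocks_add, neg_zero]

theorem anticommutator_fromBlocks_offDiag [NonUnitalNonAssocSemiring α]
    (B B' : Matrix n m α) (C C' : Matrix m n α) :
    fromBlocks 0 B C 0 * fromBlocks 0 B' C' 0 + fromBlocks 0 B' C' 0 * fromBlocks 0 B C 0 =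
      fromBlocks (B * C' + B' * C) 0 0 (C * B' + C' * B) := by
  simp only [fromBlocks_multiply, fromBlocks_add, Matrix.mul_zero, Matrix.zero_mul, add_zero,
    zero_add]

end Blocks

section Scalar

variable {k α : Type*} [Fintype k] [DecidableEq k] [Semiring α]

lemma single_mul_scalar (i j : k) (x c : α) :
    single i j x * scalar k c = single i j (x * c) := by
  ext a b
  simp [scalar_apply, mul_diagonal, single]

lemma scalar_fin_four (c : α) :
    scalar (Fin 4) c = single 0 0 c + single 1 1 c + single 2 2 c + single 3 3 c := by
  rw [scalar_apply, ← sum_single_eq_diagonal, Fin.sum_univ_four]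

end Scalar

lemma bMat_mul_scalar (i j : Fin 4) (c : E) :
    bMat i j * scalar (Fin 4) c = single i j c - single j i c := by
  simp only [bMat, sub_mul, single_mul_scalar, one_mul]

lemma commutator_eW_qP (a : R) :
    eW 2 0 a * qP 0 3 - qP 0 3 * eW 2 0 a =
      fromBlocks 0 (single 2 3 (mulE a) - single 3 2 (mulE a))
        (single 0 1 (mulE a * Der) - single 1 0 (Der * mulE a)) 0 := by
  have hphi : phiB 0 3 = bMat 1 2 := by simp [phiB]
  rw [eW, qP, hphi, bMat_mul_scalar, commutator_fromBlocks_diag_offDiag]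
  congr 1 <;>
  simp only [bMat, mul_sub, sub_mul, Matrix.neg_mul, Matrix.mul_neg, single_mul_single_same,
    single_mul_single_of_ne, ne_eq, Fin.reduceEq, not_false_eq_true, mul_one, one_mul] <;>
  abel

/-- `{[e_{w₃-w₁}(a), q_{w₁+w₄}], q_{w₁+w₂}} = -Vir(a)` (indices 0-based). -/
theorem stmt5 (a : R) :
    (eW 2 0 a * qP 0 3 - qP 0 3 * eW 2 0 a) * qP 0 1
      + qP 0 1 * (eW 2 0 a * qP 0 3 - qP 0 3 * eW 2 0 a) = -Vir a := by
  have hphi : phiB 0 1 = bMat 2 3 := by simp [phiB]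
  rw [commutator_eW_qP, qP, hphi, bMat_mul_scalar, anticommutator_fromBlocks_offDiag, Vir,
    fromBlocks_neg, neg_zero]
  congr 1 <;>
  simp only [bMat, mul_sub, sub_mul, mul_add, add_mul, single_mul_single_same,
    single_mul_single_of_ne, ne_eq, Fin.reduceEq, not_false_eq_true, mul_one, one_mul,
    Der_mul_mulE, single_add, scalar_fin_four] <;>
  abel

end
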